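/- Let S be a 0-simple Tarski monoid, and let e and f be idempotents of S with e ≠ 1 and f ≠ 0. Then there is a unit g ∈ S such that g e g⁻¹ ≤ f. -/

import Mathlib

universe u

/-- An inverse monoid with zero: every element `a` has a unique generalized
inverse `a⁻¹`, and `0` is an absorbing element. -/
class InverseMonoidWithZero (S : Type u) extends Monoid S, Zero S, Inv S where
  zero_mul' : ∀ a : S, 0 * a = 0
  mul_zero' : ∀ a : S, a * 0 = 0
  mul_inv_mul : ∀ a : S, a * a⁻¹ * a = a
  inv_mul_inv : ∀ a : S, a⁻¹ * a * a⁻¹ = a⁻¹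
  inv_unique : ∀ a b : S, a * b * a = a → b * a * b = b → b = a⁻¹

section BasicDefs

variable {S : Type u}

/-- The natural partial order: `a ≤ b` iff `a = e * b` for some idempotent `e`. -/
def nle [InverseMonoidWithZero S] (a b : S) : Prop :=
  ∃ e : S, e * e = e ∧ a = e * b

/-- `a` and `b` are compatible if `a * b⁻¹` and `a⁻¹ * b` are idempotents. -/
def Compat [InverseMonoidWithZero S] (a b : S) : Prop :=
  (a * b⁻¹) * (a * b⁻¹) = a * b⁻¹ ∧ (a⁻¹ * b) * (a⁻¹ * b) = a⁻¹ * b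

/-- `a` and `b` are orthogonal if `a * b⁻¹ = 0` and `a⁻¹ * b = 0`. -/
def Orth [InverseMonoidWithZero S] (a b : S) : Prop :=
  a * b⁻¹ = 0 ∧ a⁻¹ * b = 0

end BasicDefs

/-- A distributive inverse monoid: every compatible pair has a join (for the
natural partial order), recorded by `sup`, and multiplication distributes over
these binary joins. -/
class DistributiveInverseMonoid (S : Type u) extends InverseMonoidWithZero S where
  sup : S → S → S
  le_sup_left : ∀ a b : S, Compat a b → nle a (sup a b)
  le_sup_right : ∀ a b : S, Compat a b → nle b (sup a b)
  sup_le : ∀ a b c : S, Compat a b → nle a c → nle b c → nle (sup a b) c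
  mul_sup : ∀ a b c : S, Compat a b → c * sup a b = sup (c * a) (c * b)
  sup_mul : ∀ a b c : S, Compat a b → sup a b * c = sup (a * c) (b * c)

/-- A Boolean inverse monoid: a distributive inverse monoid whose idempotents
form a Boolean algebra under the natural partial order; `compl` records the
complementation on idempotents. -/
class BooleanInverseMonoid (S : Type u) extends DistributiveInverseMonoid S where
  compl : S → S
  compl_idem : ∀ e : S, e * e = e → compl e * compl e = compl e
  mul_compl : ∀ e : S, e * e = e → e * compl e = 0
  sup_compl : ∀ e : S, e * e = e → sup e (compl e) = 1

/-- A Boolean inverse ∧-monoid: a Boolean inverse monoid in which every pair of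
elements has a meet with respect to the natural partial order. -/
class BooleanInverseMeetMonoid (S : Type u) extends BooleanInverseMonoid S where
  inf : S → S → S
  inf_le_left : ∀ a b : S, nle (inf a b) a
  inf_le_right : ∀ a b : S, nle (inf a b) b
  le_inf : ∀ a b c : S, nle c a → nle c b → nle c (inf a b)

section MoreDefs

variable {S : Type u}

/-- The join of a compatible pair. -/
def bsup [DistributiveInverseMonoid S] (a b : S) : S := DistributiveInverseMonoid.sup a b

/-- Complementation in the Boolean algebra of idempotents. -/
def bcompl [BooleanInverseMonoid S] (e : S) : S := BooleanInverseMonoid.compl e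

/-- The binary meet. -/
def binf [BooleanInverseMeetMonoid S] (a b : S) : S := BooleanInverseMeetMonoid.inf a b

/-- The fixed-point operator `φ(s) = s ∧ 1`. -/
def phi [BooleanInverseMeetMonoid S] (s : S) : S := binf s 1

/-- The support operator `σ(s) = \overline{φ(s)} ⋅ s⁻¹ s`. -/
def sigma [BooleanInverseMeetMonoid S] (s : S) : S := bcompl (phi s) * (s⁻¹ * s)

/-- An infinitesimal is a non-zero element that squares to zero. -/
def Infinitesimal [InverseMonoidWithZero S] (a : S) : Prop := a ≠ 0 ∧ a * a = 0

/-- A (two-sided) ideal. -/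
def IsMIdeal [InverseMonoidWithZero S] (I : Set S) : Prop :=
  I.Nonempty ∧ ∀ a ∈ I, ∀ s : S, s * a ∈ I ∧ a * s ∈ I

/-- A ∨-ideal: an ideal closed under joins of compatible pairs. -/
def IsVIdeal [DistributiveInverseMonoid S] (I : Set S) : Prop :=
  IsMIdeal I ∧ ∀ a ∈ I, ∀ b ∈ I, Compat a b → bsup a b ∈ I

end MoreDefs

/-- 0-simplifying: the only ∨-ideals are `{0}` and `S`. -/
def ZeroSimplifying (S : Type u) [DistributiveInverseMonoid S] : Prop :=
  ∀ I : Set S, IsVIdeal I → I = {0} ∨ I = Set.univ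

/-- 0-simple: non-trivial and the only ideals are `{0}` and `S`. -/
def ZeroSimple (S : Type u) [InverseMonoidWithZero S] : Prop :=
  (∃ s : S, s ≠ 0) ∧ ∀ I : Set S, IsMIdeal I → I = {0} ∨ I = Set.univ

/-- Fundamental: every element commuting with all idempotents is an idempotent. -/
def Fundamental (S : Type u) [InverseMonoidWithZero S] : Prop :=
  ∀ a : S, (∀ e : S, e * e = e → a * e = e * a) → a * a = a

/-- The Boolean algebra of idempotents is atomless. -/
def IdemAtomless (S : Type u) [InverseMonoidWithZero S] : Prop :=
  ∀ e : S, e * e = e → e ≠ 0 → ∃ f : S, f * f = f ∧ f ≠ 0 ∧ nle f e ∧ f ≠ e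

section Filters

variable {S : Type u}

/-- A filter in a Boolean inverse ∧-monoid: a nonempty subset closed under
binary meets and upward closed in the natural partial order. -/
def IsMFilter [BooleanInverseMeetMonoid S] (A : Set S) : Prop :=
  A.Nonempty ∧ (∀ a ∈ A, ∀ b ∈ A, binf a b ∈ A) ∧ ∀ a ∈ A, ∀ b : S, nle a b → b ∈ A

/-- An ultrafilter: a maximal proper filter. -/
def IsMUltrafilter [BooleanInverseMeetMonoid S] (A : Set S) : Prop :=
  IsMFilter A ∧ (0 : S) ∉ A ∧ ∀ B : Set S, IsMFilter B → (0 : S) ∉ B → A ⊆ B → A = B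

/-- A filter of the Boolean algebra of idempotents (meet of idempotents is
their product). -/
def IsIdemFilter [InverseMonoidWithZero S] (F : Set S) : Prop :=
  F.Nonempty ∧ (∀ e ∈ F, e * e = e) ∧ (∀ e ∈ F, ∀ f ∈ F, e * f ∈ F) ∧
    ∀ e ∈ F, ∀ f : S, f * f = f → nle e f → f ∈ F

/-- An ultrafilter of the Boolean algebra of idempotents. -/
def IsIdemUltrafilter [InverseMonoidWithZero S] (F : Set S) : Prop :=
  IsIdemFilter F ∧ (0 : S) ∉ F ∧
    ∀ G : Set S, IsIdemFilter G → (0 : S) ∉ G → F ⊆ G → F = G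

end Filters

section PencilDefs

variable {S : Type u}

/-- `Preceq e f`: there is a pencil from `e` to `f`, i.e. finitely many
elements `x₁, …, xₘ` with `r(xᵢ) ≤ f` for all `i` and `e = ⋁ d(xᵢ)`
(a least upper bound for the natural partial order). -/
def Preceq [DistributiveInverseMonoid S] (e f : S) : Prop :=
  ∃ l : List S, l ≠ [] ∧ (∀ x ∈ l, nle (x * x⁻¹) f) ∧
    (∀ x ∈ l, nle (x⁻¹ * x) e) ∧ ∀ c : S, (∀ x ∈ l, nle (x⁻¹ * x) c) → nle e c

/-- Piecewise factorizable: every element is a finite join of elements each of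
which lies beneath a unit. -/
def PiecewiseFactorizable (S : Type u) [DistributiveInverseMonoid S] : Prop :=
  ∀ s : S, ∃ l : List S, l ≠ [] ∧ (∀ x ∈ l, ∃ g : S, IsUnit g ∧ nle x g) ∧
    (∀ x ∈ l, nle x s) ∧ ∀ c : S, (∀ x ∈ l, nle x c) → nle s c

/-- A properly infinite idempotent. -/
def ProperlyInfinite [DistributiveInverseMonoid S] (e : S) : Prop :=
  ∃ x y : S, x⁻¹ * x = e ∧ y⁻¹ * y = e ∧ Orth (x * x⁻¹) (y * y⁻¹) ∧
    nle (bsup (x * x⁻¹) (y * y⁻¹)) e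

end PencilDefs

/-- Purely infinite: every non-zero idempotent is properly infinite. -/
def PurelyInfinite (S : Type u) [DistributiveInverseMonoid S] : Prop :=
  ∀ e : S, e * e = e → e ≠ 0 → ProperlyInfinite e

/-!
0-simplicity puts `1` into the ideal generated by `f`, which for idempotents means `1 𝒟 p` for
some `p ≤ f`: there is `t` with `t⁻¹ t = 1` and `t t⁻¹ = p`. Conjugation by `t` splits
`p = e₁ ∨ m` with `e₁ = t e t⁻¹ 𝒟 e` and `m = t ē t⁻¹ 𝒟 ē`, and `m ≠ 0` because `e ≠ 1`.
The complement of `e₁` is `m ∨ p̄`, and it is still `𝒟`-related to `m`: applying 0-simplicity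
again, `m` contains some `r 𝒟 1`, and `r ∨ p̄ 𝒟 p ∨ p̄ = 1 𝒟 r`. Gluing the partial bijections
`e → e₁` and `ē → m ∨ p̄` yields a unit `g` with `g e g⁻¹ = e₁ ≤ f`.
-/

namespace InverseMonoidWithZero

section Basic

variable {S : Type u} [InverseMonoidWithZero S]

theorem inv_inv (a : S) : a⁻¹⁻¹ = a :=
  (inv_unique _ _ (inv_mul_inv a) (mul_inv_mul a)).symm

theorem inv_eq_self {e : S} (he : IsIdempotentElem e) : e⁻¹ = e := by
  have h : e * e * e = e := by rw [he.eq, he.eq]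
  exact (inv_unique e e h h).symm

theorem zero_inv : (0 : S)⁻¹ = 0 := inv_eq_self (mul_zero' 0)

theorem isIdempotentElem_mul_inv (a : S) : IsIdempotentElem (a * a⁻¹) := by
  rw [IsIdempotentElem, ← mul_assoc, mul_inv_mul]

theorem isIdempotentElem_inv_mul (a : S) : IsIdempotentElem (a⁻¹ * a) := by
  rw [IsIdempotentElem, ← mul_assoc, inv_mul_inv]

/-- The inverse `x` of `e f` satisfies `x = f x e`, which forces `x` to be idempotent;
hence so is `e f = x⁻¹`. -/
theorem isIdempotentElem_mul {e f : S} (he : IsIdempotentElem e) (hf : IsIdempotentElem f) :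
    IsIdempotentElem (e * f) := by
  set x := (e * f)⁻¹ with hx
  have hx₁ : e * f * x * (e * f) = e * f := mul_inv_mul (e * f)
  have hx₂ : x * (e * f) * x = x := inv_mul_inv (e * f)
  have hfxe : f * x * e = x := by
    apply inv_unique
    · calc e * f * (f * x * e) * (e * f) = e * (f * f) * x * (e * e) * f := by
            simp only [mul_assoc]
        _ = e * f * x * (e * f) := by rw [he.eq, hf.eq]; simp only [mul_assoc]
        _ = e * f := hx₁
    · calc f * x * e * (e * f) * (f * x * e) = f * (x * ((e * e) * (f * f)) * x) * e := by
            simp only [mul_assoc]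
        _ = f * x * e := by rw [he.eq, hf.eq, hx₂]
  have hxe : x * e = x := by rw [← hfxe, mul_assoc, he.eq]
  have hfx : f * x = x := by rw [← hfxe, ← mul_assoc, ← mul_assoc, hf.eq]
  have hxx : IsIdempotentElem x := by
    calc x * x = x * e * (f * x) := by rw [hxe, hfx]
      _ = x * (e * f) * x := by simp only [mul_assoc]
      _ = x := hx₂
  rw [show e * f = x⁻¹ by rw [hx, inv_inv], inv_eq_self hxx]
  exact hxx

theorem mul_comm_of_isIdempotentElem {e f : S} (he : IsIdempotentElem e)
    (hf : IsIdempotentElem f) : e * f = f * e := by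
  have h₁ : (e * f) * (f * e) * (e * f) = e * f := by
    calc (e * f) * (f * e) * (e * f) = e * (f * f) * (e * e) * f := by simp only [mul_assoc]
      _ = (e * f) * (e * f) := by rw [he.eq, hf.eq]; simp only [mul_assoc]
      _ = e * f := isIdempotentElem_mul he hf
  have h₂ : (f * e) * (e * f) * (f * e) = f * e := by
    calc (f * e) * (e * f) * (f * e) = f * (e * e) * (f * f) * e := by simp only [mul_assoc]
      _ = (f * e) * (f * e) := by rw [he.eq, hf.eq]; simp only [mul_assoc]
      _ = f * e := isIdempotentElem_mul hf he
  rw [inv_unique _ _ h₁ h₂, inv_eq_self (isIdempotentElem_mul he hf)]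

theorem mul_inv_rev (a b : S) : (a * b)⁻¹ = b⁻¹ * a⁻¹ := by
  have hd := mul_comm_of_isIdempotentElem (isIdempotentElem_mul_inv b) (isIdempotentElem_inv_mul a)
  symm
  apply inv_unique
  · calc a * b * (b⁻¹ * a⁻¹) * (a * b) = a * ((b * b⁻¹) * (a⁻¹ * a)) * b := by
          simp only [mul_assoc]
      _ = (a * a⁻¹ * a) * (b * b⁻¹ * b) := by rw [hd]; simp only [mul_assoc]
      _ = a * b := by rw [mul_inv_mul, mul_inv_mul]
  · calc b⁻¹ * a⁻¹ * (a * b) * (b⁻¹ * a⁻¹)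
          = b⁻¹ * ((a⁻¹ * a) * (b * b⁻¹)) * a⁻¹ := by simp only [mul_assoc]
      _ = (b⁻¹ * b * b⁻¹) * (a⁻¹ * a * a⁻¹) := by rw [← hd]; simp only [mul_assoc]
      _ = b⁻¹ * a⁻¹ := by rw [inv_mul_inv, inv_mul_inv]

theorem isUnit_of_inv_mul_eq_one {g : S} (hd : g⁻¹ * g = 1) (hr : g * g⁻¹ = 1) : IsUnit g :=
  ⟨⟨g, g⁻¹, hr, hd⟩, rfl⟩

end Basic

section NaturalOrder

variable {S : Type u} [InverseMonoidWithZero S]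

theorem nle_refl (a : S) : nle a a :=
  ⟨a * a⁻¹, isIdempotentElem_mul_inv a, (mul_inv_mul a).symm⟩

theorem nle_trans {a b c : S} (hab : nle a b) (hbc : nle b c) : nle a c := by
  obtain ⟨i, hi, rfl⟩ := hab
  obtain ⟨j, hj, rfl⟩ := hbc
  exact ⟨i * j, isIdempotentElem_mul hi hj, by rw [mul_assoc]⟩

theorem nle_antisymm {a b : S} (hab : nle a b) (hba : nle b a) : a = b := by
  obtain ⟨i, hi, rfl⟩ := hab
  obtain ⟨j, hj, hb⟩ := hba
  have hjb : j * b = b := by rw [hb, ← mul_assoc, hj]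
  calc i * b = i * (j * b) := by rw [hjb]
    _ = j * (i * b) := by rw [← mul_assoc, ← mul_assoc, mul_comm_of_isIdempotentElem hi hj]
    _ = b := hb.symm

theorem nle_zero (a : S) : nle 0 a := ⟨0, mul_zero' 0, (zero_mul' a).symm⟩

/-- If `a = i b` then `a⁻¹ = (b⁻¹ i b) b⁻¹`. -/
theorem nle_inv {a b : S} (hab : nle a b) : nle a⁻¹ b⁻¹ := by
  obtain ⟨i, hi, rfl⟩ := hab
  have hcomm := mul_comm_of_isIdempotentElem hi (isIdempotentElem_mul_inv b)
  refine ⟨b⁻¹ * i * b, ?_, ?_⟩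
  · calc b⁻¹ * i * b * (b⁻¹ * i * b) = b⁻¹ * ((i * (b * b⁻¹)) * i) * b := by
          simp only [mul_assoc]
      _ = b⁻¹ * ((b * b⁻¹) * (i * i)) * b := by rw [hcomm]; simp only [mul_assoc]
      _ = b⁻¹ * i * (b * b⁻¹ * b) := by rw [hi, ← hcomm]; simp only [mul_assoc]
      _ = b⁻¹ * i * b := by rw [mul_inv_mul]
  · rw [mul_inv_rev, inv_eq_self hi]
    calc b⁻¹ * i = b⁻¹ * (b * b⁻¹) * i := by rw [← mul_assoc, inv_mul_inv]
      _ = b⁻¹ * i * b * b⁻¹ := by rw [mul_assoc b⁻¹, ← hcomm]; simp only [mul_assoc]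

theorem nle_of_mul_eq {i j : S} (hi : IsIdempotentElem i) (h : i * j = i) : nle i j :=
  ⟨i, hi, h.symm⟩

theorem mul_eq_of_nle {i j : S} (hj : IsIdempotentElem j) (h : nle i j) : i * j = i := by
  obtain ⟨k, -, rfl⟩ := h
  rw [mul_assoc, hj.eq]

theorem mul_eq_of_nle' {i j : S} (hi : IsIdempotentElem i) (hj : IsIdempotentElem j)
    (h : nle i j) : j * i = i := by
  rw [← mul_comm_of_isIdempotentElem hi hj, mul_eq_of_nle hj h]

end NaturalOrder

section Orthogonality

variable {S : Type u} [InverseMonoidWithZero S]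

theorem orth_symm {a b : S} (h : Orth a b) : Orth b a := by
  constructor
  · rw [show b * a⁻¹ = (a * b⁻¹)⁻¹ by rw [mul_inv_rev, inv_inv], h.1, zero_inv]
  · rw [show b⁻¹ * a = (a⁻¹ * b)⁻¹ by rw [mul_inv_rev, inv_inv], h.2, zero_inv]

theorem orth_inv {a b : S} (h : Orth a b) : Orth a⁻¹ b⁻¹ := by
  rw [Orth, inv_inv, inv_inv]
  exact ⟨h.2, h.1⟩

theorem compat_of_orth {a b : S} (h : Orth a b) : Compat a b :=
  ⟨by rw [h.1, zero_mul'], by rw [h.2, zero_mul']⟩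

theorem orth_of_dom_ran {a b : S} (hd : (a⁻¹ * a) * (b⁻¹ * b) = 0)
    (hr : (a * a⁻¹) * (b * b⁻¹) = 0) : Orth a b := by
  constructor
  · calc a * b⁻¹ = (a * a⁻¹ * a) * (b⁻¹ * b * b⁻¹) := by rw [mul_inv_mul, inv_mul_inv]
      _ = a * ((a⁻¹ * a) * (b⁻¹ * b)) * b⁻¹ := by simp only [mul_assoc]
      _ = 0 := by rw [hd, mul_zero', zero_mul']
  · calc a⁻¹ * b = (a⁻¹ * a * a⁻¹) * (b * b⁻¹ * b) := by rw [inv_mul_inv, mul_inv_mul]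
      _ = a⁻¹ * (((a * a⁻¹) * (b * b⁻¹)) * b) := by simp only [mul_assoc]
      _ = 0 := by rw [hr, zero_mul', mul_zero']

theorem orth_of_mul_eq_zero {i j : S} (hi : IsIdempotentElem i) (hj : IsIdempotentElem j)
    (h : i * j = 0) : Orth i j :=
  ⟨by rw [inv_eq_self hj, h], by rw [inv_eq_self hi, h]⟩

end Orthogonality

section Joins

variable {S : Type u} [DistributiveInverseMonoid S]

theorem le_bsup_left {a b : S} (h : Compat a b) : nle a (bsup a b) :=
  DistributiveInverseMonoid.le_sup_left a b h

theorem le_bsup_right {a b : S} (h : Compat a b) : nle b (bsup a b) :=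
  DistributiveInverseMonoid.le_sup_right a b h

theorem bsup_le {a b c : S} (h : Compat a b) (hac : nle a c) (hbc : nle b c) :
    nle (bsup a b) c :=
  DistributiveInverseMonoid.sup_le a b c h hac hbc

theorem mul_bsup {a b : S} (c : S) (h : Compat a b) : c * bsup a b = bsup (c * a) (c * b) :=
  DistributiveInverseMonoid.mul_sup a b c h

theorem bsup_mul {a b : S} (c : S) (h : Compat a b) : bsup a b * c = bsup (a * c) (b * c) :=
  DistributiveInverseMonoid.sup_mul a b c h

theorem bsup_zero (a : S) : bsup a 0 = a := by
  have h : Compat a 0 := ⟨by rw [zero_inv, mul_zero', mul_zero'], by rw [mul_zero', zero_mul']⟩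
  exact nle_antisymm (bsup_le h (nle_refl a) (nle_zero a)) (le_bsup_left h)

theorem zero_bsup (a : S) : bsup 0 a = a := by
  have h : Compat 0 a := ⟨by rw [zero_mul', zero_mul'], by rw [zero_inv, zero_mul', zero_mul']⟩
  exact nle_antisymm (bsup_le h (nle_zero a) (nle_refl a)) (le_bsup_right h)

theorem bsup_comm {a b : S} (h : Orth a b) : bsup a b = bsup b a := by
  have hc := compat_of_orth h
  have hc' := compat_of_orth (orth_symm h)
  exact nle_antisymm (bsup_le hc (le_bsup_right hc') (le_bsup_left hc'))
    (bsup_le hc' (le_bsup_right hc) (le_bsup_left hc))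

theorem bsup_inv {a b : S} (h : Orth a b) : (bsup a b)⁻¹ = bsup a⁻¹ b⁻¹ := by
  have key : ∀ x y : S, Orth x y → nle (bsup x⁻¹ y⁻¹) (bsup x y)⁻¹ := fun x y hxy =>
    bsup_le (compat_of_orth (orth_inv hxy)) (nle_inv (le_bsup_left (compat_of_orth hxy)))
      (nle_inv (le_bsup_right (compat_of_orth hxy)))
  have h' := nle_inv (key a⁻¹ b⁻¹ (orth_inv h))
  rw [inv_inv, inv_inv, inv_inv] at h'
  exact nle_antisymm h' (key a b h)

theorem ran_bsup {a b : S} (h : Orth a b) :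
    bsup a b * (bsup a b)⁻¹ = bsup (a * a⁻¹) (b * b⁻¹) := by
  have hc := compat_of_orth h
  rw [bsup_inv h, mul_bsup _ (compat_of_orth (orth_inv h)), bsup_mul _ hc, bsup_mul _ hc,
    h.1, (orth_symm h).1, bsup_zero, zero_bsup]

theorem dom_bsup {a b : S} (h : Orth a b) :
    (bsup a b)⁻¹ * bsup a b = bsup (a⁻¹ * a) (b⁻¹ * b) := by
  have h' := ran_bsup (orth_inv h)
  rw [← bsup_inv h] at h'
  simpa only [inv_inv] using h'

theorem orth_bsup {a b c : S} (hab : Orth a b) (hac : Orth a c) (hbc : Orth b c) :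
    Orth a (bsup b c) := by
  constructor
  · rw [bsup_inv hbc, mul_bsup _ (compat_of_orth (orth_inv hbc)), hab.1, hac.1, bsup_zero]
  · rw [mul_bsup _ (compat_of_orth hbc), hab.2, hac.2, bsup_zero]

theorem bsup_assoc {a b c : S} (hab : Orth a b) (hac : Orth a c) (hbc : Orth b c) :
    bsup a (bsup b c) = bsup (bsup a b) c := by
  have c_ab := compat_of_orth hab
  have c_bc := compat_of_orth hbc
  have c_a_bc := compat_of_orth (orth_bsup hab hac hbc)
  have c_ab_c := compat_of_orth
    (orth_symm (orth_bsup (orth_symm hac) (orth_symm hbc) hab))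
  apply nle_antisymm
  · refine bsup_le c_a_bc ?_ (bsup_le c_bc ?_ (le_bsup_right c_ab_c))
    · exact nle_trans (le_bsup_left c_ab) (le_bsup_left c_ab_c)
    · exact nle_trans (le_bsup_right c_ab) (le_bsup_left c_ab_c)
  · refine bsup_le c_ab_c (bsup_le c_ab (le_bsup_left c_a_bc) ?_) ?_
    · exact nle_trans (le_bsup_left c_bc) (le_bsup_right c_a_bc)
    · exact nle_trans (le_bsup_right c_bc) (le_bsup_right c_a_bc)

end Joins

section Boolean

variable {S : Type u} [BooleanInverseMonoid S]

theorem isIdempotentElem_bcompl {e : S} (he : IsIdempotentElem e) :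
    IsIdempotentElem (bcompl e) :=
  BooleanInverseMonoid.compl_idem e he

theorem mul_bcompl {e : S} (he : IsIdempotentElem e) : e * bcompl e = 0 :=
  BooleanInverseMonoid.mul_compl e he

theorem bsup_bcompl {e : S} (he : IsIdempotentElem e) : bsup e (bcompl e) = 1 :=
  BooleanInverseMonoid.sup_compl e he

theorem mul_bcompl_of_nle {x p : S} (hp : IsIdempotentElem p) (hxp : nle x p) :
    x * bcompl p = 0 := by
  rw [← mul_eq_of_nle hp hxp, mul_assoc, mul_bcompl hp, mul_zero']

end Boolean

section GreenD

variable {S : Type u} [InverseMonoidWithZero S]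

/-- Green's relation `𝒟`, in the form it takes on idempotents. -/
def GreenD (i j : S) : Prop := ∃ a : S, a⁻¹ * a = i ∧ a * a⁻¹ = j

theorem GreenD.refl {e : S} (he : IsIdempotentElem e) : GreenD e e :=
  ⟨e, by rw [inv_eq_self he, he.eq], by rw [inv_eq_self he, he.eq]⟩

theorem GreenD.symm {i j : S} : GreenD i j → GreenD j i
  | ⟨a, hd, hr⟩ => ⟨a⁻¹, by rw [inv_inv, hr], by rw [inv_inv, hd]⟩

theorem GreenD.trans {i j k : S} : GreenD i j → GreenD j k → GreenD i k
  | ⟨a, ha₁, ha₂⟩, ⟨b, hb₁, hb₂⟩ =>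
    ⟨b * a,
      by rw [mul_inv_rev, mul_assoc, ← mul_assoc b⁻¹, hb₁, ← ha₂, mul_inv_mul, ha₁],
      by rw [mul_inv_rev, mul_assoc, ← mul_assoc a, ha₂, ← hb₁, inv_mul_inv, hb₂]⟩

theorem GreenD.isIdempotentElem_right {i j : S} : GreenD i j → IsIdempotentElem j
  | ⟨a, _, hr⟩ => hr ▸ isIdempotentElem_mul_inv a

theorem greenD_conj {t x : S} (ht : t⁻¹ * t = 1) (hx : IsIdempotentElem x) :
    GreenD x (t * x * t⁻¹) :=
  ⟨t * x,
    by rw [mul_inv_rev, inv_eq_self hx, mul_assoc, ← mul_assoc t⁻¹, ht, one_mul, hx.eq],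
    by rw [mul_inv_rev, inv_eq_self hx, mul_assoc, ← mul_assoc x, hx.eq, ← mul_assoc]⟩

theorem conj_mul_conj {t : S} (ht : t⁻¹ * t = 1) (x y : S) :
    t * x * t⁻¹ * (t * y * t⁻¹) = t * (x * y) * t⁻¹ := by
  have cancel : ∀ z, t⁻¹ * (t * z) = z := fun z => by rw [← mul_assoc, ht, one_mul]
  simp only [mul_assoc, cancel]

end GreenD

section GreenDJoins

variable {S : Type u} [DistributiveInverseMonoid S]

theorem GreenD.bsup_bsup {i j i' j' : S} (h : GreenD i j) (h' : GreenD i' j') (hi : i * i' = 0)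
    (hj : j * j' = 0) : GreenD (bsup i i') (bsup j j') := by
  obtain ⟨a, rfl, rfl⟩ := h
  obtain ⟨b, rfl, rfl⟩ := h'
  have hab : Orth a b := orth_of_dom_ran hi hj
  exact ⟨bsup a b, dom_bsup hab, ran_bsup hab⟩

theorem conj_bsup {t x y : S} (ht : t⁻¹ * t = 1) (hx : IsIdempotentElem x)
    (hy : IsIdempotentElem y) (hxy : x * y = 0) :
    t * bsup x y * t⁻¹ = bsup (t * x * t⁻¹) (t * y * t⁻¹) := by
  have htxy : Orth (t * x) (t * y) :=
    ⟨by rw [mul_inv_rev, inv_eq_self hy, mul_assoc, ← mul_assoc x, hxy, zero_mul', mul_zero'],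
      by rw [mul_inv_rev, inv_eq_self hx, mul_assoc, ← mul_assoc t⁻¹, ht, one_mul, hxy]⟩
  rw [mul_bsup t (compat_of_orth (orth_of_mul_eq_zero hx hy hxy)),
    bsup_mul t⁻¹ (compat_of_orth htxy)]

end GreenDJoins

section ZeroSimple

variable {S : Type u} [InverseMonoidWithZero S]

/-- 0-simplicity gives `E = a F b`; then `v = F b E` has `v⁻¹ v = E` and `v v⁻¹ ≤ F`. -/
theorem exists_greenD_le_of_zeroSimple (h0 : ZeroSimple S) {E F : S} (hE : IsIdempotentElem E)
    (hF : IsIdempotentElem F) (hF0 : F ≠ 0) : ∃ p, nle p F ∧ GreenD E p := by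
  obtain ⟨a, b, hab⟩ : ∃ a b : S, E = a * F * b := by
    let I : Set S := {x | ∃ a b, x = a * F * b}
    have hFI : F ∈ I := ⟨1, 1, by rw [one_mul, mul_one]⟩
    have hI : IsMIdeal I := ⟨⟨F, hFI⟩, fun x ⟨a, b, hx⟩ s =>
      ⟨⟨s * a, b, by rw [hx]; simp only [mul_assoc]⟩,
        ⟨a, b * s, by rw [hx]; simp only [mul_assoc]⟩⟩⟩
    rcases h0.2 I hI with h | h
    · exact absurd (h ▸ hFI : F ∈ ({0} : Set S)) hF0
    · have hEI : E ∈ I := h ▸ Set.mem_univ E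
      exact hEI
  set u := E * a * F
  set v := F * b * E
  have huv : u * v = E := by
    calc u * v = E * (a * (F * F) * b) * E := by simp only [u, v, mul_assoc]
      _ = E := by rw [hF.eq, ← hab, hE.eq, hE.eq]
  have hvE : v * E = v := by simp only [v, mul_assoc, hE.eq]
  have hFv : F * v = v := by simp only [v, ← mul_assoc, hF.eq]
  clear_value u v
  have hE_le : E * (v⁻¹ * v) = E := by
    calc E * (v⁻¹ * v) = (u * v)⁻¹ * (u * v) * (v⁻¹ * v) := by
          rw [huv, inv_eq_self hE, hE.eq]
      _ = v⁻¹ * u⁻¹ * u * (v * v⁻¹ * v) := by rw [mul_inv_rev]; simp only [mul_assoc]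
      _ = (u * v)⁻¹ * (u * v) := by rw [mul_inv_mul, mul_inv_rev]; simp only [mul_assoc]
      _ = E := by rw [huv, inv_eq_self hE, hE.eq]
  have hdom : v⁻¹ * v = E := by
    calc v⁻¹ * v = v⁻¹ * v * E := by rw [mul_assoc, hvE]
      _ = E := by rw [← mul_comm_of_isIdempotentElem hE (isIdempotentElem_inv_mul v), hE_le]
  refine ⟨v * v⁻¹, nle_of_mul_eq (isIdempotentElem_mul_inv v) ?_, v, hdom, rfl⟩
  rw [mul_comm_of_isIdempotentElem (isIdempotentElem_mul_inv v) hF, ← mul_assoc, hFv]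

end ZeroSimple

section Units

variable {S : Type u} [DistributiveInverseMonoid S]

theorem exists_isUnit_conj_eq {e e' j j' : S} (h : GreenD e j) (h' : GreenD e' j')
    (he : e * e' = 0) (hj : j * j' = 0) (he₁ : bsup e e' = 1) (hj₁ : bsup j j' = 1) :
    ∃ g : S, IsUnit g ∧ g * e * g⁻¹ = j := by
  obtain ⟨a, rfl, rfl⟩ := h
  obtain ⟨b, rfl, rfl⟩ := h'
  have hab : Orth a b := orth_of_dom_ran he hj
  refine ⟨bsup a b, isUnit_of_inv_mul_eq_one (by rw [dom_bsup hab, he₁])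
    (by rw [ran_bsup hab, hj₁]), ?_⟩
  have hae : a * (a⁻¹ * a) = a := by rw [← mul_assoc, mul_inv_mul]
  have hbe : b * (a⁻¹ * a) = 0 := by
    calc b * (a⁻¹ * a) = b * ((b⁻¹ * b) * (a⁻¹ * a)) := by
          simp only [← mul_assoc, mul_inv_mul]
      _ = 0 := by
          rw [mul_comm_of_isIdempotentElem (isIdempotentElem_inv_mul b)
            (isIdempotentElem_inv_mul a), he, mul_zero']
  calc bsup a b * (a⁻¹ * a) * (bsup a b)⁻¹ = a * bsup a⁻¹ b⁻¹ := by
        rw [bsup_mul _ (compat_of_orth hab), hae, hbe, bsup_zero, bsup_inv hab]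
    _ = a * a⁻¹ := by rw [mul_bsup _ (compat_of_orth (orth_inv hab)), hab.1, bsup_zero]

end Units

section Absorption

variable {S : Type u} [BooleanInverseMonoid S]

theorem mul_bsup_bcompl_eq_zero_and_bsup_eq_one {x y p : S} (hx : IsIdempotentElem x)
    (hy : IsIdempotentElem y) (hp : IsIdempotentElem p) (hxy : x * y = 0) (hxyp : bsup x y = p) :
    x * bsup y (bcompl p) = 0 ∧ bsup x (bsup y (bcompl p)) = 1 := by
  have hq := isIdempotentElem_bcompl hp
  have hc := compat_of_orth (orth_of_mul_eq_zero hx hy hxy)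
  have hxq := mul_bcompl_of_nle hp (hxyp ▸ le_bsup_left hc)
  have hyq := mul_bcompl_of_nle hp (hxyp ▸ le_bsup_right hc)
  constructor
  · rw [mul_bsup x (compat_of_orth (orth_of_mul_eq_zero hy hq hyq)), hxy, hxq, bsup_zero]
  · rw [bsup_assoc (orth_of_mul_eq_zero hx hy hxy) (orth_of_mul_eq_zero hx hq hxq)
      (orth_of_mul_eq_zero hy hq hyq), hxyp, bsup_bcompl hp]

theorem greenD_bsup_bcompl_of_greenD_one {p r : S} (hp : GreenD 1 p) (hr : GreenD 1 r)
    (hrp : r * bcompl p = 0) : GreenD (bsup r (bcompl p)) r := by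
  have hp' := hp.isIdempotentElem_right
  have h := (hr.symm.trans hp).bsup_bsup (GreenD.refl (isIdempotentElem_bcompl hp')) hrp
    (mul_bcompl hp')
  rw [bsup_bcompl hp'] at h
  exact h.trans hr

/-- Split `m = n ∨ r` with `n = m r̄`, and absorb `p̄` into `r`. -/
theorem greenD_bsup_bcompl {p r m : S} (hp : GreenD 1 p) (hr : GreenD 1 r)
    (hm : IsIdempotentElem m) (hrm : nle r m) (hmp : nle m p) :
    GreenD (bsup m (bcompl p)) m := by
  have hp' := hp.isIdempotentElem_right
  have hr' := hr.isIdempotentElem_right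
  have hq := isIdempotentElem_bcompl hp'
  set n := m * bcompl r
  have hn : IsIdempotentElem n := isIdempotentElem_mul hm (isIdempotentElem_bcompl hr')
  have hrq : r * bcompl p = 0 := mul_bcompl_of_nle hp' (nle_trans hrm hmp)
  have hnr : n * r = 0 := by
    rw [mul_assoc, mul_comm_of_isIdempotentElem (isIdempotentElem_bcompl hr') hr',
      mul_bcompl hr', mul_zero']
  have hnq : n * bcompl p = 0 := by
    rw [mul_assoc, mul_comm_of_isIdempotentElem (isIdempotentElem_bcompl hr') hq, ← mul_assoc,
      mul_bcompl_of_nle hp' hmp, zero_mul']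
  have hmn : m = bsup n r := by
    calc m = m * bsup r (bcompl r) := by rw [bsup_bcompl hr', mul_one]
      _ = bsup r n := by
          rw [mul_bsup m (compat_of_orth (orth_of_mul_eq_zero hr' (isIdempotentElem_bcompl hr')
            (mul_bcompl hr'))), mul_eq_of_nle' hr' hm hrm]
      _ = bsup n r := bsup_comm (orth_symm (orth_of_mul_eq_zero hn hr' hnr))
  have hn_rq : n * bsup r (bcompl p) = 0 := by
    rw [mul_bsup n (compat_of_orth (orth_of_mul_eq_zero hr' hq hrq)), hnr, hnq, bsup_zero]
  rw [hmn, ← bsup_assoc (orth_of_mul_eq_zero hn hr' hnr) (orth_of_mul_eq_zero hn hq hnq)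
    (orth_of_mul_eq_zero hr' hq hrq)]
  exact (GreenD.refl hn).bsup_bsup (greenD_bsup_bcompl_of_greenD_one hp hr hrq) hn_rq hnr

end Absorption

end InverseMonoidWithZero

theorem statement18_general (S : Type u) [BooleanInverseMeetMonoid S]
    (h0 : ZeroSimple S)
    (e f : S) (he : e * e = e) (hf : f * f = f) (hne : e ≠ 1) (hnf : f ≠ 0) :
    ∃ g : S, IsUnit g ∧ nle (g * e * g⁻¹) f := by
  open InverseMonoidWithZero in
  obtain ⟨p, hpf, hp⟩ := exists_greenD_le_of_zeroSimple h0 IsIdempotentElem.one hf hnf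
  obtain ⟨t, ht, htp⟩ := id hp
  have he' := isIdempotentElem_bcompl he
  have hee' : e * bcompl e = 0 := mul_bcompl he
  have hd := greenD_conj ht he
  have hd' := greenD_conj ht he'
  set e₁ := t * e * t⁻¹
  set m := t * bcompl e * t⁻¹
  have he₁ := hd.isIdempotentElem_right
  have hm := hd'.isIdempotentElem_right
  have he₁m : e₁ * m = 0 := by rw [conj_mul_conj ht, hee', mul_zero', zero_mul']
  have hsplit : bsup e₁ m = p := by
    rw [← conj_bsup ht he he' hee', bsup_bcompl he, mul_one, htp]
  have hm0 : m ≠ 0 := by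
    have hrec : t⁻¹ * m * t = bcompl e := by
      simp only [m, ← mul_assoc, ht, one_mul]
      rw [mul_assoc, ht, mul_one]
    intro h
    rw [h, mul_zero', zero_mul'] at hrec
    exact hne (by rw [← bsup_bcompl he, ← hrec, bsup_zero])
  obtain ⟨r, hrm, hr⟩ := exists_greenD_le_of_zeroSimple h0 IsIdempotentElem.one hm hm0
  have hc := compat_of_orth (orth_of_mul_eq_zero he₁ hm he₁m)
  have hmq := greenD_bsup_bcompl hp hr hm hrm (hsplit ▸ le_bsup_right hc)
  obtain ⟨he₁q, hsum⟩ :=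
    mul_bsup_bcompl_eq_zero_and_bsup_eq_one he₁ hm hp.isIdempotentElem_right he₁m hsplit
  obtain ⟨g, hg, hge⟩ :=
    exists_isUnit_conj_eq hd (hd'.trans hmq.symm) hee' he₁q (bsup_bcompl he) hsum
  exact ⟨g, hg, hge ▸ nle_trans (hsplit ▸ le_bsup_left hc) hpf⟩

/-- In a 0-simple Tarski monoid, for idempotents `e ≠ 1` and
`f ≠ 0` there is a unit `g` with `g e g⁻¹ ≤ f`. -/
theorem statement18 (S : Type u) [BooleanInverseMeetMonoid S] [Countable S]
    (hat : IdemAtomless S) (h0 : ZeroSimple S)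
    (e f : S) (he : e * e = e) (hf : f * f = f) (hne : e ≠ 1) (hnf : f ≠ 0) :
    ∃ g : S, IsUnit g ∧ nle (g * e * g⁻¹) f :=
  statement18_general S h0 e f he hf hne hnf
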